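/- Let s, k ∈ ℕ with k ≥ 1 and let G and H be graphs on the same vertex set, each with minimum degree at least 3. If G ≡_{C_{8k}} H, then G^s ≡_{C_k} H^s. -/

import Mathlib

/-- The edges of `G`, oriented according to the linear order on the vertices. -/
def SubEdges {V : Type} [LinearOrder V] (G : SimpleGraph V) : Type :=
  {p : V × V // p.1 < p.2 ∧ G.Adj p.1 p.2}

/-- The vertex set of the `s`-subdivision of `G`: the original vertices together with
`s` new internal path vertices for each edge. -/
def SubdivVerts {V : Type} [LinearOrder V] (G : SimpleGraph V) (s : ℕ) : Type :=
  V ⊕ (SubEdges G × Fin s)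

/-- The `s`-subdivision `G^s` of `G`: every edge of `G` is replaced by a path with `s`
new internal vertices (for `s = 0` this is `G` itself). -/
def subdivision {V : Type} [LinearOrder V] (G : SimpleGraph V) (s : ℕ) :
    SimpleGraph (SubdivVerts G s) :=
  SimpleGraph.fromRel (fun x y =>
    match x, y with
    | Sum.inl u, Sum.inl v => s = 0 ∧ G.Adj u v
    | Sum.inl u, Sum.inr (e, j) => (u = e.1.1 ∧ (j : ℕ) = 0) ∨ (u = e.1.2 ∧ (j : ℕ) = s - 1)
    | Sum.inr (e, j), Sum.inr (e', j') => e = e' ∧ (j : ℕ) + 1 = (j' : ℕ)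
    | Sum.inr _, Sum.inl _ => False)

/-- Formulas of the `k`-variable fragment of first-order logic with counting quantifiers,
over the language of graphs. `count n i φ` is the counting quantifier `∃^{≥n} x_i φ`. -/
inductive CFormula (k : ℕ) : Type
  | eq : Fin k → Fin k → CFormula k
  | adj : Fin k → Fin k → CFormula k
  | not : CFormula k → CFormula k
  | and : CFormula k → CFormula k → CFormula k
  | count : ℕ → Fin k → CFormula k → CFormula k

/-- The free variables of a counting-logic formula. -/
def CFormula.freeVars {k : ℕ} : CFormula k → Finset (Fin k)
  | .eq i j => {i, j}
  | .adj i j => {i, j}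
  | .not φ => φ.freeVars
  | .and φ ψ => φ.freeVars ∪ ψ.freeVars
  | .count _ i φ => φ.freeVars.erase i

/-- Satisfaction of a counting-logic formula in the graph `G` under the assignment `a`. -/
def CSat {V : Type} (G : SimpleGraph V) {k : ℕ} : CFormula k → (Fin k → V) → Prop
  | .eq i j, a => a i = a j
  | .adj i j, a => G.Adj (a i) (a j)
  | .not φ, a => ¬ CSat G φ a
  | .and φ ψ, a => CSat G φ a ∧ CSat G ψ a
  | .count n i φ, a => n ≤ Set.ncard {u : V | CSat G φ (Function.update a i u)}

/-- `G ≡_{C_k} H` : the graphs `G` and `H` satisfy exactly the same sentences of the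
`k`-variable fragment of first-order logic with counting. -/
def CEquiv {V W : Type} (G : SimpleGraph V) (H : SimpleGraph W) (k : ℕ) : Prop :=
  ∀ φ : CFormula k, φ.freeVars = ∅ →
    ((∀ a : Fin k → V, CSat G φ a) ↔ (∀ a : Fin k → W, CSat H φ a))

/-!
A vertex of `Gˢ` is either a vertex `u` of `G` or the `j`-th inner vertex on the path replacing
an edge `uw`, so it can be named by a pair `(u, w)` of vertices of `G` together with a "shape"
`none` or `some j`. Replacing each variable `x_i` of a `C_k` formula about `Gˢ` by two variables
about `G` and branching over the finitely many shapes turns it into a `C_{2k}` formula about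
`G`; a counting quantifier over `Gˢ` becomes a count of pairs, in which every vertex of `Gˢ` is
seen exactly twice. Hence `C_{2k}`-equivalence, and a fortiori `C_{8k}`-equivalence, of `G` and
`H` passes to `Gˢ` and `Hˢ`.
-/

namespace CFormula

instance : IsEmpty (CFormula 0) :=
  ⟨fun φ => by induction φ <;> first | exact Fin.elim0 ‹_› | assumption⟩

variable {V : Type} {G : SimpleGraph V} {k m : ℕ}

theorem csat_congr (φ : CFormula k) {a a' : Fin k → V} (h : ∀ i ∈ φ.freeVars, a i = a' i) :
    CSat G φ a ↔ CSat G φ a' := by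
  induction φ generalizing a a' with
  | eq i j | adj i j => simp_all [CSat, freeVars]
  | not φ ih => exact not_congr (ih h)
  | and φ ψ ihφ ihψ =>
    simp only [freeVars, Finset.mem_union] at h
    exact and_congr (ihφ fun i hi => h i (.inl hi)) (ihψ fun i hi => h i (.inr hi))
  | count n i φ ih =>
    simp only [CSat]
    congr! 2
    ext u
    refine ih fun j hj => ?_
    rcases eq_or_ne j i with rfl | hji
    · simp
    · simpa [hji] using h j (Finset.mem_erase.2 ⟨hji, hj⟩)

theorem forall_csat_iff_forall_csat_const {W : Type} (f : W → V) (hf : Nonempty V → Nonempty W)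
    {φ : CFormula k} (hφ : φ.freeVars = ∅) :
    (∀ a, CSat G φ a) ↔ ∀ w, CSat G φ fun _ => f w := by
  refine ⟨fun h w => h _, fun h a => ?_⟩
  cases k with
  | zero => exact isEmptyElim φ
  | succ k =>
    obtain ⟨w⟩ := hf ⟨a 0⟩
    exact (csat_congr φ (by simp [hφ])).1 (h w)

def rename (f : Fin k → Fin m) : CFormula k → CFormula m
  | .eq i j => .eq (f i) (f j)
  | .adj i j => .adj (f i) (f j)
  | .not φ => .not (φ.rename f)
  | .and φ ψ => .and (φ.rename f) (ψ.rename f)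
  | .count n i φ => .count n (f i) (φ.rename f)

theorem csat_rename {f : Fin k → Fin m} (hf : Function.Injective f) (φ : CFormula k)
    (b : Fin m → V) : CSat G (φ.rename f) b ↔ CSat G φ (b ∘ f) := by
  induction φ generalizing b with
  | eq i j | adj i j => rfl
  | not φ ih => exact not_congr (ih b)
  | and φ ψ ihφ ihψ => exact and_congr (ihφ b) (ihψ b)
  | count n i φ ih =>
    simp only [rename, CSat, ih, Function.update_comp_eq_of_injective _ hf]

theorem freeVars_rename {f : Fin k → Fin m} (hf : Function.Injective f) (φ : CFormula k) :
    (φ.rename f).freeVars = φ.freeVars.image f := by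
  induction φ with
  | eq i j | adj i j => simp [rename, freeVars, Finset.image_insert]
  | not φ ih => exact ih
  | and φ ψ ihφ ihψ => simp [rename, freeVars, ihφ, ihψ, Finset.image_union]
  | count n i φ ih => simp [rename, freeVars, ih, Finset.image_erase hf]

theorem forall_csat_rename_iff {f : Fin k → Fin m} (hf : Function.Injective f) {φ : CFormula k}
    (hφ : φ.freeVars = ∅) : (∀ b, CSat G (φ.rename f) b) ↔ ∀ a, CSat G φ a := by
  have hψ : (φ.rename f).freeVars = ∅ := by rw [freeVars_rename hf, hφ, Finset.image_empty]
  rw [forall_csat_iff_forall_csat_const id id hψ, forall_csat_iff_forall_csat_const id id hφ]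
  exact forall_congr' fun v => csat_rename hf φ _

end CFormula

open CFormula in
theorem CEquiv.mono {V W : Type} {G : SimpleGraph V} {H : SimpleGraph W} {m n : ℕ}
    (h : CEquiv G H m) (hnm : n ≤ m) : CEquiv G H n := by
  intro φ hφ
  have hf := Fin.castLE_injective hnm
  rw [← forall_csat_rename_iff hf hφ, ← forall_csat_rename_iff hf hφ]
  exact h _ (by rw [freeVars_rename hf, hφ, Finset.image_empty])

namespace Set

theorem ncard_eq_ncard_preimage_inl_add_ncard_preimage_inr {α β : Type*} [Finite α] [Finite β]
    (S : Set (α ⊕ β)) : S.ncard = (Sum.inl ⁻¹' S).ncard + (Sum.inr ⁻¹' S).ncard := by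
  simp only [← Nat.card_coe_set_eq, ← Nat.card_sum]
  exact Nat.card_congr Equiv.subtypeSum

theorem ncard_eq_sum_ncard_fiber_fst {α β : Type*} [Fintype α] [Finite β] (S : Set (α × β)) :
    S.ncard = ∑ u, {w | (u, w) ∈ S}.ncard := by
  simp only [← Nat.card_coe_set_eq, ← Nat.card_sigma]
  exact Nat.card_congr
    { toFun := fun p => ⟨p.1.1, p.1.2, p.2⟩
      invFun := fun q => ⟨(q.1, q.2.1), q.2.2⟩ }

theorem ncard_eq_sum_ncard_fiber_snd {α β : Type*} [Finite α] [Fintype β] (S : Set (α × β)) :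
    S.ncard = ∑ w, {u | (u, w) ∈ S}.ncard := by
  simp only [← Nat.card_coe_set_eq, ← Nat.card_sigma]
  exact Nat.card_congr
    { toFun := fun p => ⟨p.1.2, p.1.1, p.2⟩
      invFun := fun q => ⟨(q.2.1, q.1), q.2.2⟩ }

theorem sum_ncard_lt_eq_sum_min {α : Type*} [Fintype α] (f : α → ℕ) (t : ℕ) :
    ∑ r ∈ Finset.range t, {u | r < f u}.ncard = ∑ u, min (f u) t := by
  classical
  simp only [Set.ncard_eq_toFinset_card', Set.toFinset_ofPred, Finset.card_filter]
  rw [Finset.sum_comm]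
  refine Finset.sum_congr rfl fun u _ => ?_
  rw [← Finset.card_filter, show (Finset.range t).filter (· < f u) = Finset.range (min (f u) t) by
    ext; simp; omega, Finset.card_range]

theorem le_sum_ncard_lt_iff {α : Type*} [Fintype α] (f : α → ℕ) (t : ℕ) :
    t ≤ ∑ r ∈ Finset.range t, {u | r < f u}.ncard ↔ t ≤ ∑ u, f u := by
  rw [sum_ncard_lt_eq_sum_min]
  refine ⟨fun h => h.trans (Finset.sum_le_sum fun u _ => min_le_left _ _), fun h => ?_⟩
  by_cases hbig : ∃ u, t ≤ f u
  · obtain ⟨u, hu⟩ := hbig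
    calc t = min (f u) t := by omega
      _ ≤ ∑ u, min (f u) t :=
        Finset.single_le_sum (f := fun u => min (f u) t) (by simp) (Finset.mem_univ u)
  · push Not at hbig
    rwa [Finset.sum_congr rfl fun u _ => min_eq_left (hbig u).le]

end Set

namespace CFormula

variable {m : ℕ}

def top (x : Fin m) : CFormula m := .count 0 x (.eq x x)

def bot (x : Fin m) : CFormula m := .not (top x)

def or (φ ψ : CFormula m) : CFormula m := .not (.and (.not φ) (.not ψ))

def guard (x : Fin m) (c : Prop) [Decidable c] (φ : CFormula m) : CFormula m :=
  if c then φ else bot x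

def anyOf (x : Fin m) (l : List (CFormula m)) : CFormula m := l.foldr or (bot x)

def sumGE (x : Fin m) : List (ℕ → CFormula m) → ℕ → CFormula m
  | [], t => guard x (t = 0) (top x)
  | F :: l, t => anyOf x ((List.range (t + 1)).map fun r => .and (F r) (sumGE x l (t - r)))

/-- Layer-cake counting: the number of pairs `(x_p, x_q)` satisfying `ψ` is
`∑ r, #{u | u has more than r partners}`, and truncating this sum at `r < t` does not change
whether it reaches `t`. -/
def pairCountGE (p q : Fin m) (t : ℕ) (ψ : CFormula m) : CFormula m :=
  sumGE p ((List.range t).map fun r n => .count n p (.count (r + 1) q ψ)) t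

section Semantics

variable {V : Type} {G : SimpleGraph V} {b : Fin m → V} {x : Fin m}

@[simp] theorem csat_top : CSat G (top x) b := by simp [top, CSat]

@[simp] theorem csat_bot : ¬ CSat G (bot x) b := by simp [bot, CSat]

@[simp] theorem csat_or {φ ψ : CFormula m} : CSat G (or φ ψ) b ↔ CSat G φ b ∨ CSat G ψ b := by
  simp only [or, CSat]; tauto

@[simp] theorem csat_guard {c : Prop} [Decidable c] {φ : CFormula m} :
    CSat G (guard x c φ) b ↔ c ∧ CSat G φ b := by
  unfold guard; split_ifs <;> simp_all

@[simp] theorem csat_anyOf {l : List (CFormula m)} :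
    CSat G (anyOf x l) b ↔ ∃ φ ∈ l, CSat G φ b := by
  induction l with
  | nil => simp [anyOf]
  | cons ψ l ih => simp_all [anyOf]

theorem csat_sumGE {ι : Type*} (l : List ι) (F : ι → ℕ → CFormula m) (c : ι → ℕ)
    (hF : ∀ y ∈ l, ∀ t, CSat G (F y t) b ↔ t ≤ c y) (t : ℕ) :
    CSat G (sumGE x (l.map F) t) b ↔ t ≤ (l.map c).sum := by
  induction l generalizing t with
  | nil => simp [sumGE]
  | cons y l ih =>
    have hl := ih fun z hz => hF z (List.mem_cons_of_mem _ hz)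
    simp only [List.map_cons, sumGE, csat_anyOf, List.mem_map, List.mem_range, List.sum_cons]
    constructor
    · rintro ⟨_, ⟨r, -, rfl⟩, hr, hrest⟩
      rw [hF y List.mem_cons_self] at hr
      rw [hl] at hrest
      omega
    · intro ht
      refine ⟨_, ⟨min t (c y), by omega, rfl⟩, ?_, ?_⟩
      · rw [hF y List.mem_cons_self]; omega
      · rw [hl]; omega

theorem csat_pairCountGE [Finite V] {p q : Fin m} (ψ : CFormula m) (t : ℕ) :
    CSat G (pairCountGE p q t ψ) b ↔
      t ≤ {uw : V × V | CSat G ψ (Function.update (Function.update b p uw.1) q uw.2)}.ncard := by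
  have := Fintype.ofFinite V
  rw [pairCountGE, csat_sumGE _ _ _ (fun r _ n => Iff.rfl) t, Set.ncard_eq_sum_ncard_fiber_fst,
    ← Set.le_sum_ncard_lt_iff]
  simp [Finset.sum, Finset.range, Multiset.range, CSat]

end Semantics

section FreeVars

variable {x : Fin m}

@[simp] theorem freeVars_bot : (bot x).freeVars = ∅ := by simp [bot, top, freeVars]

@[simp] theorem freeVars_or {φ ψ : CFormula m} :
    (or φ ψ).freeVars = φ.freeVars ∪ ψ.freeVars := rfl

theorem freeVars_guard_subset {c : Prop} [Decidable c] {φ : CFormula m} :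
    (guard x c φ).freeVars ⊆ φ.freeVars := by
  unfold guard; split_ifs <;> simp

theorem freeVars_anyOf_subset {l : List (CFormula m)} {A : Finset (Fin m)}
    (h : ∀ ψ ∈ l, ψ.freeVars ⊆ A) : (anyOf x l).freeVars ⊆ A := by
  induction l with
  | nil => simp [anyOf]
  | cons ψ l ih =>
    simp only [List.mem_cons, forall_eq_or_imp] at h
    exact Finset.union_subset h.1 (ih h.2)

theorem freeVars_sumGE_subset {l : List (ℕ → CFormula m)} {A : Finset (Fin m)}
    (h : ∀ F ∈ l, ∀ t, (F t).freeVars ⊆ A) (t : ℕ) : (sumGE x l t).freeVars ⊆ A := by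
  induction l generalizing t with
  | nil => exact freeVars_guard_subset.trans (by simp [top, freeVars])
  | cons F l ih =>
    simp only [List.mem_cons, forall_eq_or_imp] at h
    refine freeVars_anyOf_subset fun ψ hψ => ?_
    obtain ⟨r, -, rfl⟩ := List.mem_map.1 hψ
    exact Finset.union_subset (h.1 r) (ih h.2 _)

theorem freeVars_pairCountGE_subset {p q : Fin m} {t : ℕ} {ψ : CFormula m} :
    (pairCountGE p q t ψ).freeVars ⊆ (ψ.freeVars.erase q).erase p := by
  refine freeVars_sumGE_subset (fun F hF n => ?_) t
  obtain ⟨r, -, rfl⟩ := List.mem_map.1 hF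
  exact subset_rfl

end FreeVars

end CFormula

theorem SubEdges.ext_iff {V : Type} [LinearOrder V] {G : SimpleGraph V} {e f : SubEdges G} :
    e = f ↔ e.1.1 = f.1.1 ∧ e.1.2 = f.1.2 :=
  ⟨fun h => h ▸ ⟨rfl, rfl⟩, fun h => Subtype.ext (Prod.ext h.1 h.2)⟩

namespace Subdivision

variable {V : Type} [LinearOrder V] {G : SimpleGraph V} {s : ℕ}

instance [Finite V] : Finite (SubEdges G) := by unfold SubEdges; infer_instance

instance [Finite V] : Finite (SubdivVerts G s) := by unfold SubdivVerts; infer_instance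

theorem inr_eq_inr_iff {e e' : SubEdges G} {j j' : Fin s} :
    (.inr (e, j) : SubdivVerts G s) = .inr (e', j') ↔ e = e' ∧ j = j' :=
  ⟨fun h => Prod.mk.inj (Sum.inr_injective h), fun ⟨he, hj⟩ => he ▸ hj ▸ rfl⟩

@[simp] theorem adj_inl_inl {u v : V} :
    (subdivision G s).Adj (.inl u) (.inl v) ↔ s = 0 ∧ G.Adj u v := by
  refine (SimpleGraph.fromRel_adj _ _ _).trans ?_
  grind [SimpleGraph.Adj.ne, SimpleGraph.adj_symm]

@[simp] theorem adj_inl_inr {u : V} {e : SubEdges G} {j : Fin s} :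
    (subdivision G s).Adj (.inl u) (.inr (e, j)) ↔
      (u = e.1.1 ∧ (j : ℕ) = 0) ∨ (u = e.1.2 ∧ (j : ℕ) + 1 = s) := by
  have := j.2
  refine (SimpleGraph.fromRel_adj _ _ _).trans ?_
  grind

@[simp] theorem adj_inr_inr {e e' : SubEdges G} {j j' : Fin s} :
    (subdivision G s).Adj (.inr (e, j)) (.inr (e', j')) ↔
      e = e' ∧ ((j : ℕ) + 1 = j' ∨ (j' : ℕ) + 1 = j) := by
  refine (SimpleGraph.fromRel_adj _ _ _).trans ?_
  grind

/-- `x` is the inner vertex of the path replacing the edge `uw` that is the `j`-th one counted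
from `u`, starting at `0`. -/
def IsPathVertex (G : SimpleGraph V) (s : ℕ) (u w : V) (j : Fin s) (x : SubdivVerts G s) :
    Prop :=
  ∃ (e : SubEdges G) (j' : Fin s), x = .inr (e, j') ∧
    ((u = e.1.1 ∧ w = e.1.2 ∧ j = j') ∨ (u = e.1.2 ∧ w = e.1.1 ∧ j = j'.rev))

namespace IsPathVertex

variable {u w u' w' v : V} {j j' : Fin s} {x y : SubdivVerts G s}

theorem adj (h : IsPathVertex G s u w j x) : G.Adj u w := by
  obtain ⟨e, j', -, ⟨rfl, rfl, -⟩ | ⟨rfl, rfl, -⟩⟩ := h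
  exacts [e.2.2, e.2.2.symm]

theorem ne_inl (h : IsPathVertex G s u w j x) : x ≠ .inl v := by
  obtain ⟨e, j', rfl, -⟩ := h
  exact Sum.inr_ne_inl

theorem eq_iff (hx : IsPathVertex G s u w j x) (hy : IsPathVertex G s u' w' j' y) :
    x = y ↔ (u = u' ∧ w = w' ∧ j = j') ∨ (u = w' ∧ w = u' ∧ j = j'.rev) := by
  obtain ⟨e, i, rfl, hxe⟩ := hx
  obtain ⟨e', i', rfl, hye⟩ := hy
  have := e.2.1
  have := e'.2.1
  refine inr_eq_inr_iff.trans ?_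
  rw [SubEdges.ext_iff]
  grind [Fin.rev_rev]

theorem adj_inl_iff (hx : IsPathVertex G s u w j x) :
    (subdivision G s).Adj (.inl v) x ↔ (v = u ∧ (j : ℕ) = 0) ∨ (v = w ∧ (j : ℕ) + 1 = s) := by
  obtain ⟨e, i, rfl, hxe⟩ := hx
  have := i.2
  rw [adj_inl_inr]
  rcases hxe with ⟨rfl, rfl, rfl⟩ | ⟨rfl, rfl, rfl⟩ <;> grind

theorem adj_iff (hx : IsPathVertex G s u w j x) (hy : IsPathVertex G s u' w' j' y) :
    (subdivision G s).Adj x y ↔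
      (u = u' ∧ w = w' ∧ ((j : ℕ) + 1 = j' ∨ (j' : ℕ) + 1 = j)) ∨
      (u = w' ∧ w = u' ∧ ((j : ℕ) + j' + 2 = s ∨ (j : ℕ) + j' = s)) := by
  obtain ⟨e, i, rfl, hxe⟩ := hx
  obtain ⟨e', i', rfl, hye⟩ := hy
  have := e.2.1
  have := e'.2.1
  have := i.2
  have := i'.2
  rw [adj_inr_inr, SubEdges.ext_iff]
  rcases hxe with ⟨rfl, rfl, rfl⟩ | ⟨rfl, rfl, rfl⟩ <;>
    rcases hye with ⟨rfl, rfl, rfl⟩ | ⟨rfl, rfl, rfl⟩ <;> grind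

end IsPathVertex

theorem exists_isPathVertex {u w : V} (h : G.Adj u w) (j : Fin s) :
    ∃ x, IsPathVertex G s u w j x := by
  rcases h.ne.lt_or_gt with hlt | hlt
  · exact ⟨_, ⟨(u, w), hlt, h⟩, j, rfl, .inl ⟨rfl, rfl, rfl⟩⟩
  · exact ⟨_, ⟨(w, u), hlt, h.symm⟩, j.rev, rfl, .inr ⟨rfl, rfl, (Fin.rev_rev j).symm⟩⟩

/-- The pair `(u, w)` of shape `τ` names the vertex `x` of `Gˢ`: shape `none` names the original
vertex `u` (with `w = u`), shape `some j` an inner vertex of the path from `u` to `w`. -/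
def Encodes (G : SimpleGraph V) (s : ℕ) : Option (Fin s) → V → V → SubdivVerts G s → Prop
  | none, u, w, x => w = u ∧ x = .inl u
  | some j, u, w, x => IsPathVertex G s u w j x

/-- Every vertex of `Gˢ` has exactly two names among these shapes: an inner vertex one from each
end of its path, an original vertex one from each copy of `none`. -/
def shapes (s : ℕ) : List (Option (Fin s)) := none :: none :: (List.finRange s).map some

theorem ncard_encodes_none (S : Set (SubdivVerts G s)) :
    {p : V × V | ∃ x ∈ S, Encodes G s none p.1 p.2 x}.ncard = (Sum.inl ⁻¹' S).ncard := by
  have : {p : V × V | ∃ x ∈ S, Encodes G s none p.1 p.2 x} =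
      (fun v => (v, v)) '' (Sum.inl ⁻¹' S) := by
    ext ⟨u, w⟩
    simp only [Encodes, Set.mem_ofPred_eq, Set.mem_image, Prod.mk.injEq]
    constructor
    · rintro ⟨x, hx, rfl, rfl⟩
      exact ⟨_, hx, rfl, rfl⟩
    · rintro ⟨v, hv, rfl, rfl⟩
      exact ⟨_, hv, rfl, rfl⟩
  rw [this, Set.ncard_image_of_injective _ fun u v h => congrArg Prod.fst h]

theorem ncard_encodes_some [Finite V] (S : Set (SubdivVerts G s)) (j : Fin s) :
    {p : V × V | ∃ x ∈ S, Encodes G s (some j) p.1 p.2 x}.ncard =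
      {e | (e, j) ∈ Sum.inr ⁻¹' S}.ncard + {e | (e, j.rev) ∈ Sum.inr ⁻¹' S}.ncard := by
  have : {p : V × V | ∃ x ∈ S, Encodes G s (some j) p.1 p.2 x} =
      (fun e : SubEdges G => e.1) '' {e | (e, j) ∈ Sum.inr ⁻¹' S} ∪
      (fun e : SubEdges G => e.1.swap) '' {e | (e, j.rev) ∈ Sum.inr ⁻¹' S} := by
    ext ⟨u, w⟩
    simp only [Encodes, IsPathVertex, Set.mem_ofPred_eq, Set.mem_union, Set.mem_image]
    constructor
    · rintro ⟨_, hx, e, i, rfl, ⟨rfl, rfl, rfl⟩ | ⟨rfl, rfl, rfl⟩⟩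
      · exact .inl ⟨e, hx, rfl⟩
      · exact .inr ⟨e, by rwa [Fin.rev_rev], rfl⟩
    · rintro (⟨e, he, h⟩ | ⟨e, he, h⟩)
      · exact ⟨_, he, e, j, rfl, .inl ⟨congrArg Prod.fst h.symm, congrArg Prod.snd h.symm, rfl⟩⟩
      · exact ⟨_, he, e, j.rev, rfl,
          .inr ⟨congrArg Prod.fst h.symm, congrArg Prod.snd h.symm, (Fin.rev_rev j).symm⟩⟩
  have hdisj : Disjoint ((fun e : SubEdges G => e.1) '' {e | (e, j) ∈ Sum.inr ⁻¹' S})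
      ((fun e : SubEdges G => e.1.swap) '' {e | (e, j.rev) ∈ Sum.inr ⁻¹' S}) := by
    refine Set.disjoint_left.2 ?_
    rintro _ ⟨e, -, rfl⟩ ⟨e', -, h⟩
    have h1 : e'.1.2 = e.1.1 := congrArg Prod.fst h
    have h2 : e'.1.1 = e.1.2 := congrArg Prod.snd h
    exact lt_asymm e.2.1 (h1 ▸ h2 ▸ e'.2.1)
  have hinj : Function.Injective fun e : SubEdges G => e.1 := Subtype.val_injective
  have hinj' : Function.Injective fun e : SubEdges G => e.1.swap := Prod.swap_injective.comp hinj
  rw [this, Set.ncard_union_eq hdisj, Set.ncard_image_of_injective _ hinj,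
    Set.ncard_image_of_injective _ hinj']

theorem sum_ncard_encodes [Finite V] (S : Set (SubdivVerts G s)) :
    ((shapes s).map fun τ => {p : V × V | ∃ x ∈ S, Encodes G s τ p.1 p.2 x}.ncard).sum =
      2 * S.ncard := by
  have hrev : ∑ j : Fin s, {e | (e, j.rev) ∈ Sum.inr ⁻¹' S}.ncard =
      ∑ j : Fin s, {e | (e, j) ∈ Sum.inr ⁻¹' S}.ncard :=
    Fintype.sum_equiv Fin.revPerm _ _ fun _ => rfl
  have hS : S.ncard = (Sum.inl ⁻¹' S).ncard + (Sum.inr ⁻¹' S).ncard :=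
    Set.ncard_eq_ncard_preimage_inl_add_ncard_preimage_inr S
  have hinr : (Sum.inr ⁻¹' S).ncard = ∑ j : Fin s, {e | (e, j) ∈ Sum.inr ⁻¹' S}.ncard :=
    Set.ncard_eq_sum_ncard_fiber_snd _
  simp only [shapes, List.map_cons, List.sum_cons, List.map_map, Function.comp_def,
    ← Fin.sum_univ_def, ncard_encodes_none, ncard_encodes_some, Finset.sum_add_distrib, hrev]
  omega

section Translation

variable {k : ℕ}

def fstVar (i : Fin k) : Fin (k + k) := Fin.castAdd k i

def sndVar (i : Fin k) : Fin (k + k) := Fin.natAdd k i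

def owner : Fin (k + k) → Fin k := Fin.addCases id id

@[simp] theorem fstVar_inj {i i' : Fin k} : fstVar i = fstVar i' ↔ i = i' :=
  (Fin.castAdd_injective k k).eq_iff

@[simp] theorem sndVar_inj {i i' : Fin k} : sndVar i = sndVar i' ↔ i = i' :=
  (Fin.natAdd_injective k k).eq_iff

@[simp] theorem fstVar_ne_sndVar (i i' : Fin k) : fstVar i ≠ sndVar i' := by
  simp [fstVar, sndVar, Fin.ext_iff]; omega

@[simp] theorem sndVar_ne_fstVar (i i' : Fin k) : sndVar i ≠ fstVar i' :=
  (fstVar_ne_sndVar i' i).symm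

@[simp] theorem owner_fstVar (i : Fin k) : owner (fstVar i) = i := Fin.addCases_left i

@[simp] theorem owner_sndVar (i : Fin k) : owner (sndVar i) = i := Fin.addCases_right i

theorem eq_fstVar_or_eq_sndVar (y : Fin (k + k)) :
    y = fstVar (owner y) ∨ y = sndVar (owner y) := by
  refine Fin.addCases (fun i => ?_) (fun i => ?_) y
  · exact .inl (by rw [← fstVar, owner_fstVar])
  · exact .inr (by rw [← sndVar, owner_sndVar])

open CFormula

def translateEq (s : ℕ) (i i' : Fin k) :
    Option (Fin s) → Option (Fin s) → CFormula (k + k)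
  | none, none => .eq (fstVar i) (fstVar i')
  | some j, some j' =>
    or (guard (fstVar i) (j = j') (.and (.eq (fstVar i) (fstVar i')) (.eq (sndVar i) (sndVar i'))))
      (guard (fstVar i) (j = j'.rev)
        (.and (.eq (fstVar i) (sndVar i')) (.eq (sndVar i) (fstVar i'))))
  | _, _ => bot (fstVar i)

def translateAdj (s : ℕ) (i i' : Fin k) :
    Option (Fin s) → Option (Fin s) → CFormula (k + k)
  | none, none => guard (fstVar i) (s = 0) (.adj (fstVar i) (fstVar i'))
  | none, some j' =>
    or (guard (fstVar i) ((j' : ℕ) = 0) (.eq (fstVar i) (fstVar i')))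
      (guard (fstVar i) ((j' : ℕ) + 1 = s) (.eq (fstVar i) (sndVar i')))
  | some j, none =>
    or (guard (fstVar i) ((j : ℕ) = 0) (.eq (fstVar i') (fstVar i)))
      (guard (fstVar i) ((j : ℕ) + 1 = s) (.eq (fstVar i') (sndVar i)))
  | some j, some j' =>
    or (guard (fstVar i) ((j : ℕ) + 1 = j' ∨ (j' : ℕ) + 1 = j)
        (.and (.eq (fstVar i) (fstVar i')) (.eq (sndVar i) (sndVar i'))))
      (guard (fstVar i) ((j : ℕ) + j' + 2 = s ∨ (j : ℕ) + j' = s)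
        (.and (.eq (fstVar i) (sndVar i')) (.eq (sndVar i) (fstVar i'))))

def isEncoding (s : ℕ) (i : Fin k) : Option (Fin s) → CFormula (k + k)
  | none => .eq (fstVar i) (sndVar i)
  | some _ => .adj (fstVar i) (sndVar i)

def translate (σ : Fin k → Option (Fin s)) : CFormula k → CFormula (k + k)
  | .eq i i' => translateEq s i i' (σ i) (σ i')
  | .adj i i' => translateAdj s i i' (σ i) (σ i')
  | .not φ => .not (translate σ φ)
  | .and φ ψ => .and (translate σ φ) (translate σ ψ)
  | .count n i φ =>
    sumGE (fstVar i) ((shapes s).map fun τ t => pairCountGE (fstVar i) (sndVar i) t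
      (.and (isEncoding s i τ) (translate (Function.update σ i τ) φ))) (2 * n)

theorem csat_translateEq {i i' : Fin k} {τ τ' : Option (Fin s)} {b : Fin (k + k) → V}
    {x y : SubdivVerts G s} (hx : Encodes G s τ (b (fstVar i)) (b (sndVar i)) x)
    (hy : Encodes G s τ' (b (fstVar i')) (b (sndVar i')) y) :
    CSat G (translateEq s i i' τ τ') b ↔ x = y := by
  rcases τ with _ | j <;> rcases τ' with _ | j'
  · obtain ⟨-, rfl⟩ := hx
    obtain ⟨-, rfl⟩ := hy
    exact Sum.inl_injective.eq_iff.symm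
  · obtain ⟨-, rfl⟩ := hx
    exact iff_of_false csat_bot (IsPathVertex.ne_inl hy).symm
  · obtain ⟨-, rfl⟩ := hy
    exact iff_of_false csat_bot hx.ne_inl
  · simp only [translateEq, csat_or, csat_guard, CSat, IsPathVertex.eq_iff hx hy]
    tauto

theorem csat_translateAdj {i i' : Fin k} {τ τ' : Option (Fin s)} {b : Fin (k + k) → V}
    {x y : SubdivVerts G s} (hx : Encodes G s τ (b (fstVar i)) (b (sndVar i)) x)
    (hy : Encodes G s τ' (b (fstVar i')) (b (sndVar i')) y) :
    CSat G (translateAdj s i i' τ τ') b ↔ (subdivision G s).Adj x y := by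
  rcases τ with _ | j <;> rcases τ' with _ | j'
  · obtain ⟨-, rfl⟩ := hx
    obtain ⟨-, rfl⟩ := hy
    simp [translateAdj, CSat]
  · obtain ⟨-, rfl⟩ := hx
    simp only [translateAdj, csat_or, csat_guard, CSat, IsPathVertex.adj_inl_iff hy]
    tauto
  · obtain ⟨-, rfl⟩ := hy
    refine Iff.trans ?_ (SimpleGraph.adj_comm _ _ _)
    simp only [translateAdj, csat_or, csat_guard, CSat, IsPathVertex.adj_inl_iff hx]
    tauto
  · simp only [translateAdj, csat_or, csat_guard, CSat, IsPathVertex.adj_iff hx hy]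
    tauto

theorem csat_isEncoding {i : Fin k} {τ : Option (Fin s)} {b : Fin (k + k) → V} :
    CSat G (isEncoding s i τ) b ↔ ∃ x, Encodes G s τ (b (fstVar i)) (b (sndVar i)) x :=
  match τ with
  | none => ⟨fun h => ⟨_, h.symm, rfl⟩, fun ⟨_, h, _⟩ => h.symm⟩
  | some j => ⟨fun h => exists_isPathVertex h j, fun ⟨_, hx⟩ => hx.adj⟩

def EncodesAssignment (G : SimpleGraph V) (s : ℕ) (σ : Fin k → Option (Fin s))
    (a : Fin k → SubdivVerts G s) (b : Fin (k + k) → V) : Prop :=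
  ∀ i, Encodes G s (σ i) (b (fstVar i)) (b (sndVar i)) (a i)

theorem EncodesAssignment.update {σ : Fin k → Option (Fin s)} {a : Fin k → SubdivVerts G s}
    {b : Fin (k + k) → V} (h : EncodesAssignment G s σ a b) (i : Fin k) {τ : Option (Fin s)}
    {u w : V} {x : SubdivVerts G s} (hx : Encodes G s τ u w x) :
    EncodesAssignment G s (Function.update σ i τ) (Function.update a i x)
      (Function.update (Function.update b (fstVar i) u) (sndVar i) w) := by
  intro i'
  rcases eq_or_ne i' i with rfl | hne
  · simpa using hx
  · simpa [Function.update_apply, hne] using h i'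

theorem csat_translate [Finite V] (φ : CFormula k) {σ : Fin k → Option (Fin s)}
    {a : Fin k → SubdivVerts G s} {b : Fin (k + k) → V} (h : EncodesAssignment G s σ a b) :
    CSat (subdivision G s) φ a ↔ CSat G (translate σ φ) b := by
  induction φ generalizing σ a b with
  | eq i i' => exact (csat_translateEq (h i) (h i')).symm
  | adj i i' => exact (csat_translateAdj (h i) (h i')).symm
  | not φ ih => exact not_congr (ih h)
  | and φ ψ ihφ ihψ => exact and_congr (ihφ h) (ihψ h)
  | count n i φ ih =>
    simp only [translate, CSat]
    set S := {x | CSat (subdivision G s) φ (Function.update a i x)}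
    have hpairs (τ : Option (Fin s)) :
        {uw : V × V | CSat G (.and (isEncoding s i τ) (translate (Function.update σ i τ) φ))
          (Function.update (Function.update b (fstVar i) uw.1) (sndVar i) uw.2)} =
        {uw | ∃ x ∈ S, Encodes G s τ uw.1 uw.2 x} := by
      ext ⟨u, w⟩
      simp only [CSat, csat_isEncoding, Set.mem_ofPred_eq, Function.update_apply, fstVar_ne_sndVar,
        if_true, if_false]
      constructor
      · rintro ⟨⟨x, hx⟩, hφ⟩
        exact ⟨x, (ih (h.update i hx)).2 hφ, hx⟩
      · rintro ⟨x, hxS, hx⟩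
        exact ⟨⟨x, hx⟩, (ih (h.update i hx)).1 hxS⟩
    rw [csat_sumGE (shapes s) (fun τ t => pairCountGE (fstVar i) (sndVar i) t
      (.and (isEncoding s i τ) (translate (Function.update σ i τ) φ))) _
      fun τ _ t => csat_pairCountGE _ t]
    simp only [hpairs, sum_ncard_encodes]
    omega

theorem freeVars_translateEq_subset (i i' : Fin k) (τ τ' : Option (Fin s)) :
    (translateEq s i i' τ τ').freeVars ⊆ {fstVar i, sndVar i, fstVar i', sndVar i'} := by
  rcases τ with _ | j <;> rcases τ' with _ | j' <;>
    simp only [translateEq, freeVars_bot, freeVars_or, Finset.empty_subset]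
  · simp [freeVars, Finset.subset_iff]
  · refine Finset.union_subset (freeVars_guard_subset.trans ?_) (freeVars_guard_subset.trans ?_) <;>
      simp [freeVars, Finset.subset_iff]

theorem freeVars_translateAdj_subset (i i' : Fin k) (τ τ' : Option (Fin s)) :
    (translateAdj s i i' τ τ').freeVars ⊆ {fstVar i, sndVar i, fstVar i', sndVar i'} := by
  rcases τ with _ | j <;> rcases τ' with _ | j' <;> simp only [translateAdj, freeVars_or] <;>
    (try refine Finset.union_subset ?_ ?_) <;> refine freeVars_guard_subset.trans ?_ <;>
    simp [freeVars, Finset.subset_iff]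

theorem freeVars_translate_subset (φ : CFormula k) (σ : Fin k → Option (Fin s)) :
    (translate σ φ).freeVars ⊆ Finset.univ.filter (owner · ∈ φ.freeVars) := by
  induction φ generalizing σ with
  | eq i i' =>
    refine (freeVars_translateEq_subset i i' _ _).trans ?_
    simp [freeVars, Finset.subset_iff]
  | adj i i' =>
    refine (freeVars_translateAdj_subset i i' _ _).trans ?_
    simp [freeVars, Finset.subset_iff]
  | not φ ih => exact ih σ
  | and φ ψ ihφ ihψ =>
    exact Finset.union_subset
      ((ihφ σ).trans (Finset.monotone_filter_right _ fun _ _ => Finset.mem_union_left _))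
      ((ihψ σ).trans (Finset.monotone_filter_right _ fun _ _ => Finset.mem_union_right _))
  | count n i φ ih =>
    refine freeVars_sumGE_subset (fun F hF t => ?_) _
    obtain ⟨τ, -, rfl⟩ := List.mem_map.1 hF
    refine freeVars_pairCountGE_subset.trans fun y hy => ?_
    obtain ⟨hy0, hy1, hy⟩ := by simpa only [Finset.mem_erase, freeVars, Finset.mem_union] using hy
    have hencoding : (isEncoding s i τ).freeVars = {fstVar i, sndVar i} := by cases τ <;> rfl
    rcases hy with hy | hy
    · simp [hencoding, hy0, hy1] at hy
    · have hown : owner y ≠ i := by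
        rintro rfl
        rcases eq_fstVar_or_eq_sndVar y with h | h <;> contradiction
      simpa [freeVars, hown] using ih _ hy

theorem freeVars_translate_eq_empty {φ : CFormula k} (hφ : φ.freeVars = ∅)
    (σ : Fin k → Option (Fin s)) : (translate σ φ).freeVars = ∅ :=
  Finset.subset_empty.1 ((freeVars_translate_subset φ σ).trans (by simp [hφ]))

theorem forall_csat_iff_forall_csat_translate [Finite V] {φ : CFormula k}
    (hφ : φ.freeVars = ∅) :
    (∀ a, CSat (subdivision G s) φ a) ↔
      ∀ b, CSat G (translate (fun _ => (none : Option (Fin s))) φ) b := by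
  refine (forall_csat_iff_forall_csat_const (G := subdivision G s) Sum.inl
    (fun ⟨x⟩ => ⟨x.elim id fun e => e.1.1.1⟩) hφ).trans ?_
  rw [forall_csat_iff_forall_csat_const id id (freeVars_translate_eq_empty hφ _)]
  exact forall_congr' fun v => csat_translate φ fun _ => ⟨rfl, rfl⟩

end Translation

end Subdivision

theorem cEquiv_subdivision_of_cEquiv_two_mul {V W : Type} [Finite V] [LinearOrder V] [Finite W]
    [LinearOrder W] (G : SimpleGraph V) (H : SimpleGraph W) (s k : ℕ) (h : CEquiv G H (2 * k)) :
    CEquiv (subdivision G s) (subdivision H s) k := by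
  rw [two_mul] at h
  intro φ hφ
  rw [Subdivision.forall_csat_iff_forall_csat_translate hφ,
    Subdivision.forall_csat_iff_forall_csat_translate hφ]
  exact h _ (Subdivision.freeVars_translate_eq_empty hφ _)

theorem cEquiv_subdivision_general {V : Type} [Fintype V] [LinearOrder V]
    (G H : SimpleGraph V) (s k : ℕ)
    (h : CEquiv G H (8 * k)) :
    CEquiv (subdivision G s) (subdivision H s) k :=
  cEquiv_subdivision_of_cEquiv_two_mul G H s k (h.mono (by omega))

/-- Let `G` and `H` be graphs on the same vertex set with minimum degree at least `3`.
If `G ≡_{C_{8k}} H`, then `Gˢ ≡_{C_k} Hˢ` for every `s`. -/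
theorem cEquiv_subdivision {V : Type} [Fintype V] [LinearOrder V]
    (G H : SimpleGraph V) (s k : ℕ) (hk : 1 ≤ k)
    (hdegG : ∀ v : V, 3 ≤ Set.ncard {w : V | G.Adj v w})
    (hdegH : ∀ v : V, 3 ≤ Set.ncard {w : V | H.Adj v w})
    (h : CEquiv G H (8 * k)) :
    CEquiv (subdivision G s) (subdivision H s) k :=
  cEquiv_subdivision_general G H s k h
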